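/- arXiv:1912.00614 — 10 statements merged into one kernel-verified Lean document; each statement's English description precedes it below -/
import Mathlib

section
/- Let C be a clutter over ground set V, and suppose C has a 1/4-integral fractional packing y of value at least 2 (i.e., every entry of y is a multiple of 1/4). Then there exist at most five members of C with no common element. -/
/-!
Every member in the support of a `1/4`-integral packing carries weight at least `1/4`, so any
five of them carry total weight at least `5/4 > 1`; if the support has at most five members, the
whole support carries weight at least `2 > 1`. Either way we get at most five members whose total
weight exceeds `1`, and the packing constraint at a common element would bound it by `1`.
-/

open Finset

section Packing

variable {V R : Type*} [DecidableEq V] [Field R] [LinearOrder R] [IsStrictOrderedRing R]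

theorem one_div_le_of_eq_intCast_div {q : R} {z : ℤ} {n : ℕ} (hq : 0 < q)
    (h : q = z / n) : 1 / n ≤ q := by
  obtain rfl | hn := Nat.eq_zero_or_pos n
  · simp [h] at hq
  have hn : (0 : R) < n := by exact_mod_cast hn
  have hz : (1 : R) ≤ z := by
    have : (0 : R) < z := by rwa [h, div_pos_iff_of_pos_right hn] at hq
    exact_mod_cast (show (0 : ℤ) < z by exact_mod_cast this)
  rw [h]
  gcongr

theorem exists_subset_card_le_one_lt_sum {ι : Type*} {T : Finset ι} {w : ι → R} {ε : R}
    {k : ℕ} (hw : ∀ i ∈ T, ε ≤ w i) (hk : 1 < k * ε) (hT : 1 < ∑ i ∈ T, w i) :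
    ∃ S ⊆ T, #S ≤ k ∧ 1 < ∑ i ∈ S, w i := by
  by_cases hcard : #T ≤ k
  · exact ⟨T, subset_refl T, hcard, hT⟩
  · obtain ⟨S, hST, hScard⟩ := exists_subset_card_eq (not_le.mp hcard).le
    refine ⟨S, hST, hScard.le, hk.trans_le ?_⟩
    calc (k : R) * ε = ∑ _i ∈ S, ε := by rw [sum_const, hScard, nsmul_eq_mul]
      _ ≤ ∑ i ∈ S, w i := sum_le_sum fun i hi => hw i (hST hi)

theorem not_exists_common_mem_of_one_lt_sum {C S : Finset (Finset V)} {y : Finset V → R}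
    (hnonneg : ∀ A, 0 ≤ y A) (hpack : ∀ v : V, ∑ A ∈ C.filter (fun A => v ∈ A), y A ≤ 1)
    (hSC : S ⊆ C) (hS : 1 < ∑ A ∈ S, y A) : ¬ ∃ v : V, ∀ A ∈ S, v ∈ A := by
  rintro ⟨v, hv⟩
  have hS_le : ∑ A ∈ S, y A ≤ ∑ A ∈ C.filter (fun A => v ∈ A), y A :=
    sum_le_sum_of_subset_of_nonneg (fun A hA => mem_filter.mpr ⟨hSC hA, hv A hA⟩)
      fun A _ _ => hnonneg A
  exact (hS.trans_le hS_le).not_ge (hpack v)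

end Packing

theorem stmt_0_general {V : Type*} [DecidableEq V]
    (C : Finset (Finset V))
    (y : Finset V → ℚ)
    (hnonneg : ∀ A, 0 ≤ y A)
    (hquarter : ∀ A, ∃ z : ℤ, y A = z / 4)
    (hpack : ∀ v : V, ∑ A ∈ C.filter (fun A => v ∈ A), y A ≤ 1)
    (hvalue : 2 ≤ ∑ A ∈ C, y A) :
    ∃ S ⊆ C, S.card ≤ 5 ∧ ¬ ∃ v : V, ∀ A ∈ S, v ∈ A := by
  set T := C.filter (fun A => 0 < y A)
  have hquarter_le : ∀ A ∈ T, 1 / 4 ≤ y A := fun A hA => by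
    obtain ⟨z, hz⟩ := hquarter A
    exact one_div_le_of_eq_intCast_div (n := 4) (mem_filter.mp hA).2 (by exact_mod_cast hz)
  have hsum_T : ∑ A ∈ T, y A = ∑ A ∈ C, y A :=
    sum_filter_of_ne fun A _ h => (hnonneg A).lt_of_ne' h
  obtain ⟨S, hST, hcard, hS⟩ := exists_subset_card_le_one_lt_sum (k := 5) hquarter_le
    (by norm_num) (by linarith)
  have hSC : S ⊆ C := hST.trans (filter_subset _ _)
  exact ⟨S, hSC, hcard, not_exists_common_mem_of_one_lt_sum hnonneg hpack hSC hS⟩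

/-- If a clutter `C` has a `1/4`-integral fractional packing of value at least 2,
then there exist at most five members of `C` with no common element. -/
theorem stmt_0 {V : Type*} [Fintype V] [DecidableEq V]
    (C : Finset (Finset V))
    (hclutter : ∀ A ∈ C, ∀ B ∈ C, A ⊆ B → A = B)
    (y : Finset V → ℚ)
    (hsupp : ∀ A, A ∉ C → y A = 0)
    (hnonneg : ∀ A, 0 ≤ y A)
    (hquarter : ∀ A, ∃ z : ℤ, y A = z / 4)
    (hpack : ∀ v : V, ∑ A ∈ C.filter (fun A => v ∈ A), y A ≤ 1)
    (hvalue : 2 ≤ ∑ A ∈ C, y A) :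
    ∃ S ⊆ C, S.card ≤ 5 ∧ ¬ ∃ v : V, ∀ A ∈ S, v ∈ A :=
  stmt_0_general C y hnonneg hquarter hpack hvalue
end

section
/- Let C be a clutter over ground set V in which every member has cardinality at least two, and let k >= 2 be an integer. Then C has a proper k-colouring if and only if the blocker b(C) is not k-wise intersecting, i.e., there exist at most k minimal covers of C with empty intersection. -/
/-! The complement of each colour class of a proper colouring is a cover, and shrinking these
to minimal covers gives at most `k` members of the blocker, none of which contains the points of
its own colour, so they have empty intersection. Conversely, if at most `k` covers have empty
intersection, colour each point by a cover missing it: a set monochromatic in the colour of a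
cover `B` would be disjoint from `B`. -/

/-- `B` is a cover of the clutter `C`: it intersects every member. -/
def IsCover {V : Type*} [DecidableEq V] (C : Finset (Finset V)) (B : Finset V) : Prop :=
  ∀ A ∈ C, (A ∩ B).Nonempty

/-- The blocker of `C`: the family of inclusion-minimal covers of `C`. -/
def Blocker {V : Type*} [DecidableEq V] (C : Finset (Finset V)) : Set (Finset V) :=
  {B | IsCover C B ∧ ∀ B' ⊆ B, IsCover C B' → B' = B}

open Finset

section

variable {V κ : Type*} {C : Finset (Finset V)}

def IsProperColouring (C : Finset (Finset V)) (c : V → κ) : Prop :=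
  ∀ A ∈ C, ¬ ∃ i, ∀ v ∈ A, c v = i

theorem IsProperColouring.comp_injective {κ' : Type*} {c : V → κ} {ι : κ → κ'}
    (hne : ∀ A ∈ C, A.Nonempty) (hc : IsProperColouring C c) (hι : Function.Injective ι) :
    IsProperColouring C (ι ∘ c) := by
  rintro A hA ⟨j, hj⟩
  obtain ⟨v₀, hv₀⟩ := hne A hA
  exact hc A hA ⟨c v₀, fun v hv => hι ((hj v hv).trans (hj v₀ hv₀).symm)⟩

variable [DecidableEq V]

theorem mem_blocker_iff_minimal {B : Finset V} : B ∈ Blocker C ↔ Minimal (IsCover C) B := by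
  refine and_congr_right fun _ => ⟨fun h B' hB' hle => (h B' hle hB').ge, fun h B' hle hB' => ?_⟩
  exact le_antisymm hle (h hB' hle)

theorem IsCover.exists_subset_mem_blocker {B : Finset V} (hB : IsCover C B) :
    ∃ B' ⊆ B, B' ∈ Blocker C := by
  obtain ⟨B', hle, hmin⟩ := exists_minimal_le_of_wellFoundedLT _ B hB
  exact ⟨B', hle, mem_blocker_iff_minimal.mpr hmin⟩

theorem IsProperColouring.isCover_compl_colourClass [Fintype V] [DecidableEq κ] {c : V → κ}
    (hc : IsProperColouring C c) (i : κ) : IsCover C {v | c v ≠ i} := by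
  intro A hA
  obtain ⟨v, hvA, hvi⟩ : ∃ v ∈ A, c v ≠ i := by
    by_contra! h
    exact hc A hA ⟨i, h⟩
  exact ⟨v, mem_inter.mpr ⟨hvA, mem_filter.mpr ⟨mem_univ v, hvi⟩⟩⟩

theorem isProperColouring_of_forall_notMem {F : Finset (Finset V)}
    (hF : ∀ B ∈ F, IsCover C B) (f : V → F) (hf : ∀ v, v ∉ (f v : Finset V)) :
    IsProperColouring C f := by
  rintro A hA ⟨B, hB⟩
  obtain ⟨w, hw⟩ := hF B B.2 A hA
  rw [mem_inter] at hw
  exact hf w (hB w hw.1 ▸ hw.2)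

theorem IsProperColouring.exists_blocker_family [Fintype V] [Fintype κ] [DecidableEq κ]
    {c : V → κ} (hc : IsProperColouring C c) :
    ∃ F : Finset (Finset V), F.card ≤ Fintype.card κ ∧ (∀ B ∈ F, B ∈ Blocker C) ∧
      ¬ ∃ v : V, ∀ B ∈ F, v ∈ B := by
  choose g hgsub hg using fun i => (hc.isCover_compl_colourClass i).exists_subset_mem_blocker
  refine ⟨univ.image g, card_image_le, by simpa using hg, ?_⟩
  rintro ⟨v, hv⟩
  simpa using hgsub (c v) (hv _ (mem_image_of_mem g (mem_univ (c v))))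

theorem exists_isProperColouring_fin_of_covers {F : Finset (Finset V)} {k : ℕ}
    (hne : ∀ A ∈ C, A.Nonempty) (hFk : F.card ≤ k) (hF : ∀ B ∈ F, IsCover C B)
    (hempty : ¬ ∃ v : V, ∀ B ∈ F, v ∈ B) : ∃ c : V → Fin k, IsProperColouring C c := by
  push Not at hempty
  choose f hfF hf using hempty
  have hproper := isProperColouring_of_forall_notMem hF (fun v => ⟨f v, hfF v⟩) hf
  exact ⟨_, hproper.comp_injective hne ((Fin.castLEEmb hFk).injective.comp F.equivFin.injective)⟩

end

theorem stmt_1_general {V : Type*} [Fintype V] [DecidableEq V] (C : Finset (Finset V))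
    (hcard : ∀ A ∈ C, 2 ≤ A.card)
    (k : ℕ) :
    (∃ c : V → Fin k, ∀ A ∈ C, ¬ ∃ i : Fin k, ∀ v ∈ A, c v = i) ↔
    (∃ F : Finset (Finset V), F.card ≤ k ∧ (∀ B ∈ F, B ∈ Blocker C) ∧
      ¬ ∃ v : V, ∀ B ∈ F, v ∈ B) := by
  have hne : ∀ A ∈ C, A.Nonempty := fun A hA => card_pos.mp (by grind)
  constructor
  · rintro ⟨c, hc⟩
    simpa using IsProperColouring.exists_blocker_family hc
  · rintro ⟨F, hFk, hF, hempty⟩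
    exact exists_isProperColouring_fin_of_covers hne hFk (fun B hB => (hF B hB).1) hempty

/-- A clutter all of whose members have cardinality at least two has a proper
`k`-colouring if and only if its blocker is not `k`-wise intersecting, i.e. there exist at most
`k` minimal covers with empty intersection. -/
theorem stmt_1 {V : Type*} [Fintype V] [DecidableEq V] (C : Finset (Finset V))
    (hclutter : ∀ A ∈ C, ∀ B ∈ C, A ⊆ B → A = B)
    (hcard : ∀ A ∈ C, 2 ≤ A.card)
    (k : ℕ) (hk : 2 ≤ k) :
    (∃ c : V → Fin k, ∀ A ∈ C, ¬ ∃ i : Fin k, ∀ v ∈ A, c v = i) ↔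
    (∃ F : Finset (Finset V), F.card ≤ k ∧ (∀ B ∈ F, B ∈ Blocker C) ∧
      ¬ ∃ v : V, ∀ B ∈ F, v ∈ B) :=
  stmt_1_general C hcard k
end

section
/- Let S be a subset of {0,1}^n containing the zero vector. Then the cuboid of S is a binary clutter if and only if S is closed under coordinatewise addition modulo 2 (i.e., S is a binary vector space). -/
/-- The member of the cuboid corresponding to a point `p ∈ GF(2)^n`: element `(i, a)` of the
ground set `Fin n × ZMod 2` belongs to it iff `p i = a`. -/
def cubMember {n : ℕ} (p : Fin n → ZMod 2) : Finset (Fin n × ZMod 2) :=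
  Finset.univ.filter (fun x => x.2 = p x.1)

/-- The cuboid of a set `S ⊆ {0,1}^n`. -/
def Cuboid {n : ℕ} (S : Finset (Fin n → ZMod 2)) : Finset (Finset (Fin n × ZMod 2)) :=
  S.image cubMember

/-- A clutter is binary if the symmetric difference of any odd number of members contains
a member. -/
def BinaryClutter {E : Type*} [DecidableEq E] (C : Finset (Finset E)) : Prop :=
  ∀ L : List (Finset E), (∀ A ∈ L, A ∈ C) → Odd L.length →
    ∃ M ∈ C, M ⊆ L.foldr symmDiff ∅

/-!
Over `GF(2)` the indicator of `(i, a)` in the member of `p` is `1 + a + p i`, which is affine in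
`p`, and the indicator of a symmetric difference is the sum of the indicators. Hence the symmetric
difference of the members of an odd number of points `p₁, …, pₖ` is exactly the member of
`p₁ + ⋯ + pₖ`. Since distinct members are incomparable, the cuboid is binary iff `S` is closed
under sums of odd length, which for `0 ∈ S` means closed under addition (`a + b = a + b + 0`).
-/

theorem Finset.mem_foldr_symmDiff_iff {α : Type*} [DecidableEq α] (L : List (Finset α)) (x : α) :
    x ∈ L.foldr symmDiff ∅ ↔ (L.map fun A => if x ∈ A then (1 : ZMod 2) else 0).sum = 1 := by
  induction L with
  | nil => simp
  | cons A L ih =>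
    simp only [List.foldr_cons, List.map_cons, List.sum_cons, Finset.mem_symmDiff, ih]
    generalize (L.map fun A => if x ∈ A then (1 : ZMod 2) else 0).sum = s
    by_cases hx : x ∈ A <;> simp only [hx, if_true, if_false] <;> revert s <;> decide

@[simp]
theorem mem_cubMember {n : ℕ} {p : Fin n → ZMod 2} {x : Fin n × ZMod 2} :
    x ∈ cubMember p ↔ x.2 = p x.1 := by
  simp [cubMember]

theorem ite_mem_cubMember {n : ℕ} (p : Fin n → ZMod 2) (x : Fin n × ZMod 2) :
    (if x ∈ cubMember p then (1 : ZMod 2) else 0) = 1 + x.2 + p x.1 := by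
  simp only [mem_cubMember]
  generalize x.2 = a
  generalize p x.1 = b
  revert a b
  decide

theorem eq_of_cubMember_subset {n : ℕ} {p q : Fin n → ZMod 2} (h : cubMember p ⊆ cubMember q) :
    p = q :=
  funext fun i => mem_cubMember.mp (h (mem_cubMember.mpr rfl : (i, p i) ∈ cubMember p))

theorem foldr_symmDiff_map_cubMember {n : ℕ} {P : List (Fin n → ZMod 2)} (hP : Odd P.length) :
    (P.map cubMember).foldr symmDiff ∅ = cubMember P.sum := by
  have hlen : (P.length : ZMod 2) = 1 := ZMod.natCast_eq_one_iff_odd.mpr hP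
  ext x
  rw [Finset.mem_foldr_symmDiff_iff, List.map_map, mem_cubMember]
  simp only [Function.comp_def, ite_mem_cubMember, List.sum_map_add, List.map_const',
    List.sum_replicate, nsmul_eq_mul, hlen, one_mul, ← Pi.list_sum_apply]
  generalize x.2 = a
  generalize P.sum x.1 = b
  revert a b
  decide

theorem exists_list_map_cubMember_eq {n : ℕ} {S : Finset (Fin n → ZMod 2)}
    {L : List (Finset (Fin n × ZMod 2))} (hL : ∀ A ∈ L, A ∈ Cuboid S) :
    ∃ P : List (Fin n → ZMod 2), (∀ p ∈ P, p ∈ S) ∧ P.map cubMember = L := by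
  induction L with
  | nil => exact ⟨[], by simp, rfl⟩
  | cons A L ih =>
    obtain ⟨P, hPS, rfl⟩ := ih fun B hB => hL B (List.mem_cons_of_mem _ hB)
    obtain ⟨p, hpS, rfl⟩ := Finset.mem_image.mp (hL A List.mem_cons_self)
    exact ⟨p :: P, by simpa using ⟨hpS, hPS⟩, rfl⟩

/-- For `S ⊆ {0,1}^n` containing the zero vector, the cuboid of `S` is a binary
clutter iff `S` is closed under coordinatewise addition mod 2. -/
theorem stmt_4 {n : ℕ} (S : Finset (Fin n → ZMod 2))
    (h0 : (0 : Fin n → ZMod 2) ∈ S) :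
    BinaryClutter (Cuboid S) ↔ ∀ a ∈ S, ∀ b ∈ S, a + b ∈ S := by
  constructor
  · intro hbin a ha b hb
    have hL : ∀ A ∈ [a, b, 0].map cubMember, A ∈ Cuboid S := by
      simpa [Cuboid] using ⟨⟨a, ha, rfl⟩, ⟨b, hb, rfl⟩, ⟨0, h0, rfl⟩⟩
    obtain ⟨M, hM, hMsub⟩ := hbin _ hL ⟨1, rfl⟩
    obtain ⟨q, hq, rfl⟩ := Finset.mem_image.mp hM
    rw [foldr_symmDiff_map_cubMember ⟨1, rfl⟩] at hMsub
    simpa [eq_of_cubMember_subset hMsub] using hq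
  · intro hadd L hL hodd
    obtain ⟨P, hPS, rfl⟩ := exists_list_map_cubMember_eq hL
    rw [List.length_map] at hodd
    refine ⟨cubMember P.sum, Finset.mem_image_of_mem _ ?_, (foldr_symmDiff_map_cubMember hodd).ge⟩
    exact List.sum_induction (· ∈ S) (fun a b ha hb => hadd a ha b hb) h0 hPS
end

section
/- The edge set of the Petersen graph is not the union of two cycles. -/
/-- An edge set `C` of the graph `G` is a cycle if every vertex is incident with an even
number of edges of `C`. -/
def IsGraphCycle {V : Type*} [Fintype V] [DecidableEq V] (G : SimpleGraph V)
    (C : Finset (Sym2 V)) : Prop :=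
  ↑C ⊆ G.edgeSet ∧ ∀ v : V, Even ((C.filter (fun e => v ∈ e)).card)

/-- The Petersen graph: the Kneser graph on 2-element subsets of a 5-element set, with two
vertices adjacent iff the corresponding subsets are disjoint. -/
def Petersen : SimpleGraph {s : Finset (Fin 5) // s.card = 2} where
  Adj a b := Disjoint a.1 b.1
  symm := ⟨fun a b h => h.symm⟩
  loopless := by
    refine ⟨?_⟩
    intro a h
    have h2 := a.2
    rw [disjoint_self] at h
    simp [h, Finset.card_empty] at h2

private abbrev PV := {s : Finset (Fin 5) // s.card = 2}

private def P0 : PV := ⟨{0,1}, by decide⟩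
private def P1 : PV := ⟨{0,2}, by decide⟩
private def P2 : PV := ⟨{0,3}, by decide⟩
private def P3 : PV := ⟨{0,4}, by decide⟩
private def P4 : PV := ⟨{1,2}, by decide⟩
private def P5 : PV := ⟨{1,3}, by decide⟩
private def P6 : PV := ⟨{1,4}, by decide⟩
private def P7 : PV := ⟨{2,3}, by decide⟩
private def P8 : PV := ⟨{2,4}, by decide⟩
private def P9 : PV := ⟨{3,4}, by decide⟩

private def E : Fin 15 → Sym2 PV := ![s(P0,P7), s(P0,P8), s(P0,P9), s(P1,P5), s(P1,P6), s(P1,P9), s(P2,P4), s(P2,P6), s(P2,P8), s(P3,P4), s(P3,P5), s(P3,P7), s(P4,P9), s(P5,P8), s(P6,P7)]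

instance : DecidableRel Petersen.Adj := fun a b => inferInstanceAs (Decidable (Disjoint a.1 b.1))

private theorem E_surj : ∀ e ∈ Petersen.edgeSet, ∃ i : Fin 15, E i = e := by decide

private theorem E_edge : ∀ i : Fin 15, E i ∈ Petersen.edgeSet := by decide

private theorem hv0 : ∀ i : Fin 15, P0 ∈ E i ↔ (i = 0 ∨ i = 1 ∨ i = 2) := by decide
private theorem hv1 : ∀ i : Fin 15, P1 ∈ E i ↔ (i = 3 ∨ i = 4 ∨ i = 5) := by decide
private theorem hv2 : ∀ i : Fin 15, P2 ∈ E i ↔ (i = 6 ∨ i = 7 ∨ i = 8) := by decide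
private theorem hv3 : ∀ i : Fin 15, P3 ∈ E i ↔ (i = 9 ∨ i = 10 ∨ i = 11) := by decide
private theorem hv4 : ∀ i : Fin 15, P4 ∈ E i ↔ (i = 6 ∨ i = 9 ∨ i = 12) := by decide
private theorem hv5 : ∀ i : Fin 15, P5 ∈ E i ↔ (i = 3 ∨ i = 10 ∨ i = 13) := by decide
private theorem hv6 : ∀ i : Fin 15, P6 ∈ E i ↔ (i = 4 ∨ i = 7 ∨ i = 14) := by decide
private theorem hv7 : ∀ i : Fin 15, P7 ∈ E i ↔ (i = 0 ∨ i = 11 ∨ i = 14) := by decide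
private theorem hv8 : ∀ i : Fin 15, P8 ∈ E i ↔ (i = 1 ∨ i = 8 ∨ i = 13) := by decide
private theorem hv9 : ∀ i : Fin 15, P9 ∈ E i ↔ (i = 2 ∨ i = 5 ∨ i = 12) := by decide

private def xo (a b c : Bool) : Bool := (a ^^ (b ^^ c)) && !(a && b && c)

private theorem vertexLemma : ∀ p1 p2 p3 q1 q2 q3 : Bool,
    (p1 || q1) = true → (p2 || q2) = true → (p3 || q3) = true →
    Even ((bif p1 then 1 else 0) + (bif p2 then 1 else 0) + (bif p3 then 1 else 0) : ℕ) →
    Even ((bif q1 then 1 else 0) + (bif q2 then 1 else 0) + (bif q3 then 1 else 0) : ℕ) →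
    xo (p1 && q1) (p2 && q2) (p3 && q3) = true ∧
    xo (p1 && !q1) (p2 && !q2) (p3 && !q3) = true := by decide

private theorem count3 (C : Finset (Sym2 PV)) (hC : ↑C ⊆ Petersen.edgeSet) (v : PV)
    (a b c : Fin 15) (hab : E a ≠ E b) (hac : E a ≠ E c) (hbc : E b ≠ E c)
    (hv : ∀ i : Fin 15, v ∈ E i ↔ (i = a ∨ i = b ∨ i = c)) :
    (C.filter (fun e => v ∈ e)).card =
      (bif decide (E a ∈ C) then 1 else 0) + (bif decide (E b ∈ C) then 1 else 0) +
      (bif decide (E c ∈ C) then 1 else 0) := by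
  have hset : C.filter (fun e => v ∈ e) = ({E a, E b, E c} : Finset (Sym2 PV)).filter (· ∈ C) := by
    ext e
    simp only [Finset.mem_filter, Finset.mem_insert, Finset.mem_singleton]
    constructor
    · rintro ⟨heC, hve⟩
      obtain ⟨i, rfl⟩ := E_surj e (hC heC)
      rcases (hv i).1 hve with rfl | rfl | rfl
      · exact ⟨Or.inl rfl, heC⟩
      · exact ⟨Or.inr (Or.inl rfl), heC⟩
      · exact ⟨Or.inr (Or.inr rfl), heC⟩
    · rintro ⟨h, heC⟩
      refine ⟨heC, ?_⟩
      rcases h with rfl | rfl | rfl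
      · exact (hv a).2 (Or.inl rfl)
      · exact (hv b).2 (Or.inr (Or.inl rfl))
      · exact (hv c).2 (Or.inr (Or.inr rfl))
  rw [hset]
  by_cases ha : E a ∈ C <;> by_cases hb : E b ∈ C <;> by_cases hc : E c ∈ C <;>
    simp [Finset.filter_insert, Finset.filter_singleton, ha, hb, hc,
      Finset.card_insert_of_notMem, Finset.mem_insert, Finset.mem_singleton, hab, hac, hbc]

private def pmB (b0 b1 b2 b3 b4 b5 b6 b7 b8 b9 b10 b11 b12 b13 b14 : Bool) : Bool := xo b0 b1 b2 && xo b3 b4 b5 && xo b6 b7 b8 && xo b9 b10 b11 && xo b6 b9 b12 && xo b3 b10 b13 && xo b4 b7 b14 && xo b0 b11 b14 && xo b1 b8 b13 && xo b2 b5 b12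

set_option maxRecDepth 10000 in
set_option maxHeartbeats 4000000 in
private theorem core : ∀ b0 b1 b2 b3 b4 b5 b6 b7 b8 b9 b10 b11 b12 b13 b14 : Bool, pmB b0 b1 b2 b3 b4 b5 b6 b7 b8 b9 b10 b11 b12 b13 b14 = true →
    ∀ c0 c1 c2 c3 c4 c5 c6 c7 c8 c9 c10 c11 c12 c13 c14 : Bool, pmB c0 c1 c2 c3 c4 c5 c6 c7 c8 c9 c10 c11 c12 c13 c14 = true → ((b0 && c0) || (b1 && c1) || (b2 && c2) || (b3 && c3) || (b4 && c4) || (b5 && c5) || (b6 && c6) || (b7 && c7) || (b8 && c8) || (b9 && c9) || (b10 && c10) || (b11 && c11) || (b12 && c12) || (b13 && c13) || (b14 && c14)) = true := by decide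

/-- The edge set of the Petersen graph is not the union of two cycles. -/
theorem stmt_7 :
    ¬ ∃ C1 C2 : Finset (Sym2 {s : Finset (Fin 5) // s.card = 2}),
      IsGraphCycle Petersen C1 ∧ IsGraphCycle Petersen C2 ∧
      ↑(C1 ∪ C2) = Petersen.edgeSet := by
  rintro ⟨C1, C2, ⟨h1sub, h1even⟩, ⟨h2sub, h2even⟩, hUn⟩
  have hOr : ∀ i : Fin 15, (decide (E i ∈ C1) || decide (E i ∈ C2)) = true := by
    intro i
    have h : E i ∈ C1 ∪ C2 := by
      rw [← Finset.mem_coe, hUn]; exact E_edge i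
    rcases Finset.mem_union.1 h with h' | h' <;> simp [h']
  have hev1_0 : Even ((bif decide (E 0 ∈ C1) then 1 else 0) + (bif decide (E 1 ∈ C1) then 1 else 0) + (bif decide (E 2 ∈ C1) then 1 else 0) : ℕ) := by
    have h := h1even P0
    rwa [count3 C1 h1sub P0 0 1 2 (by decide) (by decide) (by decide) hv0] at h
  have hev2_0 : Even ((bif decide (E 0 ∈ C2) then 1 else 0) + (bif decide (E 1 ∈ C2) then 1 else 0) + (bif decide (E 2 ∈ C2) then 1 else 0) : ℕ) := by
    have h := h2even P0
    rwa [count3 C2 h2sub P0 0 1 2 (by decide) (by decide) (by decide) hv0] at h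
  have hev1_1 : Even ((bif decide (E 3 ∈ C1) then 1 else 0) + (bif decide (E 4 ∈ C1) then 1 else 0) + (bif decide (E 5 ∈ C1) then 1 else 0) : ℕ) := by
    have h := h1even P1
    rwa [count3 C1 h1sub P1 3 4 5 (by decide) (by decide) (by decide) hv1] at h
  have hev2_1 : Even ((bif decide (E 3 ∈ C2) then 1 else 0) + (bif decide (E 4 ∈ C2) then 1 else 0) + (bif decide (E 5 ∈ C2) then 1 else 0) : ℕ) := by
    have h := h2even P1
    rwa [count3 C2 h2sub P1 3 4 5 (by decide) (by decide) (by decide) hv1] at h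
  have hev1_2 : Even ((bif decide (E 6 ∈ C1) then 1 else 0) + (bif decide (E 7 ∈ C1) then 1 else 0) + (bif decide (E 8 ∈ C1) then 1 else 0) : ℕ) := by
    have h := h1even P2
    rwa [count3 C1 h1sub P2 6 7 8 (by decide) (by decide) (by decide) hv2] at h
  have hev2_2 : Even ((bif decide (E 6 ∈ C2) then 1 else 0) + (bif decide (E 7 ∈ C2) then 1 else 0) + (bif decide (E 8 ∈ C2) then 1 else 0) : ℕ) := by
    have h := h2even P2
    rwa [count3 C2 h2sub P2 6 7 8 (by decide) (by decide) (by decide) hv2] at h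
  have hev1_3 : Even ((bif decide (E 9 ∈ C1) then 1 else 0) + (bif decide (E 10 ∈ C1) then 1 else 0) + (bif decide (E 11 ∈ C1) then 1 else 0) : ℕ) := by
    have h := h1even P3
    rwa [count3 C1 h1sub P3 9 10 11 (by decide) (by decide) (by decide) hv3] at h
  have hev2_3 : Even ((bif decide (E 9 ∈ C2) then 1 else 0) + (bif decide (E 10 ∈ C2) then 1 else 0) + (bif decide (E 11 ∈ C2) then 1 else 0) : ℕ) := by
    have h := h2even P3
    rwa [count3 C2 h2sub P3 9 10 11 (by decide) (by decide) (by decide) hv3] at h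
  have hev1_4 : Even ((bif decide (E 6 ∈ C1) then 1 else 0) + (bif decide (E 9 ∈ C1) then 1 else 0) + (bif decide (E 12 ∈ C1) then 1 else 0) : ℕ) := by
    have h := h1even P4
    rwa [count3 C1 h1sub P4 6 9 12 (by decide) (by decide) (by decide) hv4] at h
  have hev2_4 : Even ((bif decide (E 6 ∈ C2) then 1 else 0) + (bif decide (E 9 ∈ C2) then 1 else 0) + (bif decide (E 12 ∈ C2) then 1 else 0) : ℕ) := by
    have h := h2even P4
    rwa [count3 C2 h2sub P4 6 9 12 (by decide) (by decide) (by decide) hv4] at h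
  have hev1_5 : Even ((bif decide (E 3 ∈ C1) then 1 else 0) + (bif decide (E 10 ∈ C1) then 1 else 0) + (bif decide (E 13 ∈ C1) then 1 else 0) : ℕ) := by
    have h := h1even P5
    rwa [count3 C1 h1sub P5 3 10 13 (by decide) (by decide) (by decide) hv5] at h
  have hev2_5 : Even ((bif decide (E 3 ∈ C2) then 1 else 0) + (bif decide (E 10 ∈ C2) then 1 else 0) + (bif decide (E 13 ∈ C2) then 1 else 0) : ℕ) := by
    have h := h2even P5
    rwa [count3 C2 h2sub P5 3 10 13 (by decide) (by decide) (by decide) hv5] at h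
  have hev1_6 : Even ((bif decide (E 4 ∈ C1) then 1 else 0) + (bif decide (E 7 ∈ C1) then 1 else 0) + (bif decide (E 14 ∈ C1) then 1 else 0) : ℕ) := by
    have h := h1even P6
    rwa [count3 C1 h1sub P6 4 7 14 (by decide) (by decide) (by decide) hv6] at h
  have hev2_6 : Even ((bif decide (E 4 ∈ C2) then 1 else 0) + (bif decide (E 7 ∈ C2) then 1 else 0) + (bif decide (E 14 ∈ C2) then 1 else 0) : ℕ) := by
    have h := h2even P6
    rwa [count3 C2 h2sub P6 4 7 14 (by decide) (by decide) (by decide) hv6] at h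
  have hev1_7 : Even ((bif decide (E 0 ∈ C1) then 1 else 0) + (bif decide (E 11 ∈ C1) then 1 else 0) + (bif decide (E 14 ∈ C1) then 1 else 0) : ℕ) := by
    have h := h1even P7
    rwa [count3 C1 h1sub P7 0 11 14 (by decide) (by decide) (by decide) hv7] at h
  have hev2_7 : Even ((bif decide (E 0 ∈ C2) then 1 else 0) + (bif decide (E 11 ∈ C2) then 1 else 0) + (bif decide (E 14 ∈ C2) then 1 else 0) : ℕ) := by
    have h := h2even P7
    rwa [count3 C2 h2sub P7 0 11 14 (by decide) (by decide) (by decide) hv7] at h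
  have hev1_8 : Even ((bif decide (E 1 ∈ C1) then 1 else 0) + (bif decide (E 8 ∈ C1) then 1 else 0) + (bif decide (E 13 ∈ C1) then 1 else 0) : ℕ) := by
    have h := h1even P8
    rwa [count3 C1 h1sub P8 1 8 13 (by decide) (by decide) (by decide) hv8] at h
  have hev2_8 : Even ((bif decide (E 1 ∈ C2) then 1 else 0) + (bif decide (E 8 ∈ C2) then 1 else 0) + (bif decide (E 13 ∈ C2) then 1 else 0) : ℕ) := by
    have h := h2even P8
    rwa [count3 C2 h2sub P8 1 8 13 (by decide) (by decide) (by decide) hv8] at h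
  have hev1_9 : Even ((bif decide (E 2 ∈ C1) then 1 else 0) + (bif decide (E 5 ∈ C1) then 1 else 0) + (bif decide (E 12 ∈ C1) then 1 else 0) : ℕ) := by
    have h := h1even P9
    rwa [count3 C1 h1sub P9 2 5 12 (by decide) (by decide) (by decide) hv9] at h
  have hev2_9 : Even ((bif decide (E 2 ∈ C2) then 1 else 0) + (bif decide (E 5 ∈ C2) then 1 else 0) + (bif decide (E 12 ∈ C2) then 1 else 0) : ℕ) := by
    have h := h2even P9
    rwa [count3 C2 h2sub P9 2 5 12 (by decide) (by decide) (by decide) hv9] at h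
  have L0 := vertexLemma _ _ _ _ _ _ (hOr 0) (hOr 1) (hOr 2) hev1_0 hev2_0
  have L1 := vertexLemma _ _ _ _ _ _ (hOr 3) (hOr 4) (hOr 5) hev1_1 hev2_1
  have L2 := vertexLemma _ _ _ _ _ _ (hOr 6) (hOr 7) (hOr 8) hev1_2 hev2_2
  have L3 := vertexLemma _ _ _ _ _ _ (hOr 9) (hOr 10) (hOr 11) hev1_3 hev2_3
  have L4 := vertexLemma _ _ _ _ _ _ (hOr 6) (hOr 9) (hOr 12) hev1_4 hev2_4
  have L5 := vertexLemma _ _ _ _ _ _ (hOr 3) (hOr 10) (hOr 13) hev1_5 hev2_5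
  have L6 := vertexLemma _ _ _ _ _ _ (hOr 4) (hOr 7) (hOr 14) hev1_6 hev2_6
  have L7 := vertexLemma _ _ _ _ _ _ (hOr 0) (hOr 11) (hOr 14) hev1_7 hev2_7
  have L8 := vertexLemma _ _ _ _ _ _ (hOr 1) (hOr 8) (hOr 13) hev1_8 hev2_8
  have L9 := vertexLemma _ _ _ _ _ _ (hOr 2) (hOr 5) (hOr 12) hev1_9 hev2_9
  have pm1 : pmB (decide (E 0 ∈ C1) && decide (E 0 ∈ C2)) (decide (E 1 ∈ C1) && decide (E 1 ∈ C2)) (decide (E 2 ∈ C1) && decide (E 2 ∈ C2)) (decide (E 3 ∈ C1) && decide (E 3 ∈ C2)) (decide (E 4 ∈ C1) && decide (E 4 ∈ C2)) (decide (E 5 ∈ C1) && decide (E 5 ∈ C2)) (decide (E 6 ∈ C1) && decide (E 6 ∈ C2)) (decide (E 7 ∈ C1) && decide (E 7 ∈ C2)) (decide (E 8 ∈ C1) && decide (E 8 ∈ C2)) (decide (E 9 ∈ C1) && decide (E 9 ∈ C2)) (decide (E 10 ∈ C1) && decide (E 10 ∈ C2)) (decide (E 11 ∈ C1) && decide (E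 11 ∈ C2)) (decide (E 12 ∈ C1) && decide (E 12 ∈ C2)) (decide (E 13 ∈ C1) && decide (E 13 ∈ C2)) (decide (E 14 ∈ C1) && decide (E 14 ∈ C2)) = true := by
    simp only [pmB, Bool.and_eq_true]
    exact ⟨⟨⟨⟨⟨⟨⟨⟨⟨L0.1, L1.1⟩, L2.1⟩, L3.1⟩, L4.1⟩, L5.1⟩, L6.1⟩, L7.1⟩, L8.1⟩, L9.1⟩
  have pm2 : pmB (decide (E 0 ∈ C1) && !decide (E 0 ∈ C2)) (decide (E 1 ∈ C1) && !decide (E 1 ∈ C2)) (decide (E 2 ∈ C1) && !decide (E 2 ∈ C2)) (decide (E 3 ∈ C1) && !decide (E 3 ∈ C2)) (decide (E 4 ∈ C1) && !decide (E 4 ∈ C2)) (decide (E 5 ∈ C1) && !decide (E 5 ∈ C2)) (decide (E 6 ∈ C1) && !decide (E 6 ∈ C2)) (decide (E 7 ∈ C1) && !decide (E 7 ∈ C2)) (decide (E 8 ∈ C1) && !decide (E 8 ∈ C2)) (decide (E 9 ∈ C1) && !decide (E 9 ∈ C2)) (decide (E 10 ∈ C1) && !decide (E 10 ∈ C2)) (decide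 (E 11 ∈ C1) && !decide (E 11 ∈ C2)) (decide (E 12 ∈ C1) && !decide (E 12 ∈ C2)) (decide (E 13 ∈ C1) && !decide (E 13 ∈ C2)) (decide (E 14 ∈ C1) && !decide (E 14 ∈ C2)) = true := by
    simp only [pmB, Bool.and_eq_true]
    exact ⟨⟨⟨⟨⟨⟨⟨⟨⟨L0.2, L1.2⟩, L2.2⟩, L3.2⟩, L4.2⟩, L5.2⟩, L6.2⟩, L7.2⟩, L8.2⟩, L9.2⟩
  have hov := core (decide (E 0 ∈ C1) && decide (E 0 ∈ C2)) (decide (E 1 ∈ C1) && decide (E 1 ∈ C2)) (decide (E 2 ∈ C1) && decide (E 2 ∈ C2)) (decide (E 3 ∈ C1) && decide (E 3 ∈ C2)) (decide (E 4 ∈ C1) && decide (E 4 ∈ C2)) (decide (E 5 ∈ C1) && decide (E 5 ∈ C2)) (decide (E 6 ∈ C1) && decide (E 6 ∈ C2)) (decide (E 7 ∈ C1) && decide (E 7 ∈ C2)) (decide (E 8 ∈ C1) && decide (E 8 ∈ C2)) (decide (E 9 ∈ C1) && decide (E 9 ∈ C2)) (decide (E 10 ∈ C1) && decide (E 10 ∈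 C2)) (decide (E 11 ∈ C1) && decide (E 11 ∈ C2)) (decide (E 12 ∈ C1) && decide (E 12 ∈ C2)) (decide (E 13 ∈ C1) && decide (E 13 ∈ C2)) (decide (E 14 ∈ C1) && decide (E 14 ∈ C2)) pm1 (decide (E 0 ∈ C1) && !decide (E 0 ∈ C2)) (decide (E 1 ∈ C1) && !decide (E 1 ∈ C2)) (decide (E 2 ∈ C1) && !decide (E 2 ∈ C2)) (decide (E 3 ∈ C1) && !decide (E 3 ∈ C2)) (decide (E 4 ∈ C1) && !decide (E 4 ∈ C2)) (decide (E 5 ∈ C1) && !decide (E 5 ∈ C2)) (decide (E 6 ∈ C1) && !decide (E 6 ∈ C2)) (decide (E 7 ∈ C1) && !decide (E 7 ∈ C2)) (decide (E 8 ∈ C1) && !decide (E 8 ∈ C2)) (decide (E 9 ∈ C1) && !decide (E 9 ∈ C2)) (decide (E 10 ∈ C1) && !decide (E 10 ∈ C2)) (decide (E 11 ∈ C1) && !decide (E 11 ∈ C2)) (decide (E 12 ∈ C1) && !decide (E 12 ∈ C2)) (decide (E 13 ∈ C1) && !decide (E 13 ∈ C2)) (decide (E 14 ∈ C1) && !decide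 (E 14 ∈ C2)) pm2
  have key : ∀ x y : Bool, ((x && y) && (x && !y)) = false := by decide
  simp only [key, Bool.false_or, Bool.or_false] at hov
  exact Bool.noConfusion hov
end

section
/- Let M1, M2 be binary matroids over ground sets E1, E2 with E1 ∩ E2 = {e}, where e is neither a loop nor a coloop of M1 or of M2, and let M = M1 Δ M2 be their 2-sum. If each of M1, M2 has three cycles whose union is its ground set, then M has three cycles whose union is its ground set. -/
/-- A binary matroid, given by its ground set and its cycle space (a GF(2)-subspace,
presented as a family of subsets of the ground set containing `∅` and closed under
symmetric difference). -/
structure BinaryMatroid (α : Type*) [DecidableEq α] where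
  E : Finset α
  cycles : Set (Finset α)
  subset_ground : ∀ C ∈ cycles, C ⊆ E
  empty_mem : ∅ ∈ cycles
  symmDiff_mem : ∀ C ∈ cycles, ∀ D ∈ cycles, symmDiff C D ∈ cycles

variable {α : Type*} [DecidableEq α]

/-- A loop: a one-element cycle (hence circuit). -/
def BinaryMatroid.IsLoop (M : BinaryMatroid α) (e : α) : Prop := {e} ∈ M.cycles

/-- A coloop: an element of the ground set contained in no cycle. -/
def BinaryMatroid.IsColoop (M : BinaryMatroid α) (e : α) : Prop :=
  e ∈ M.E ∧ ∀ C ∈ M.cycles, e ∉ C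

/-- `M = M1 Δ M2`: the binary matroid on `E1 Δ E2` whose cycles are the subsets of
`E1 Δ E2` of the form `C1 Δ C2` with `Ci` a cycle of `Mi`. -/
def DeltaSum (M M1 M2 : BinaryMatroid α) : Prop :=
  M.E = symmDiff M1.E M2.E ∧
  M.cycles = {C | C ⊆ M.E ∧ ∃ C1 ∈ M1.cycles, ∃ C2 ∈ M2.cycles, C = symmDiff C1 C2}

/-!
Normalise each cover so that `e` lies in exactly one of its three cycles: if `e ∈ A`, replacing
`B` by `A Δ B` when `e ∈ B` keeps the union and removes `e`. Pair the cycle of `M1` through `e`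
with that of `M2`, and the other two pairwise. Paired cycles contain `e` both or neither, so
their symmetric difference avoids `E1 ∩ E2 = {e}`, lies in `E1 Δ E2` and is a cycle of `M`; the
three of them cover `E1 Δ E2` because each `Mi`-cover covers `Ei`.
-/

open scoped symmDiff

namespace Finset

lemma symmDiff_subset_symmDiff {X Y E F : Finset α} (hX : X ⊆ E) (hY : Y ⊆ F)
    (h : ∀ x ∈ E ∩ F, x ∈ X ↔ x ∈ Y) : X ∆ Y ⊆ E ∆ F := by
  intro x
  have hxE := @hX x
  have hxF := @hY x
  have hx := h x
  simp only [mem_symmDiff, mem_inter] at hxE hxF hx ⊢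
  tauto

lemma symmDiff_subset_union_symmDiff (A₁ B₁ C₁ A₂ B₂ C₂ : Finset α) :
    (A₁ ∪ B₁ ∪ C₁) ∆ (A₂ ∪ B₂ ∪ C₂) ⊆ A₁ ∆ A₂ ∪ B₁ ∆ B₂ ∪ C₁ ∆ C₂ := by
  intro x
  simp only [mem_symmDiff, mem_union]
  tauto

end Finset

namespace BinaryMatroid

lemma exists_cycle_not_mem_union_eq (M : BinaryMatroid α) {A B : Finset α} {e : α}
    (hA : A ∈ M.cycles) (hB : B ∈ M.cycles) (he : e ∈ A) :
    ∃ B' ∈ M.cycles, e ∉ B' ∧ A ∪ B' = A ∪ B := by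
  by_cases heB : e ∈ B
  · refine ⟨A ∆ B, M.symmDiff_mem A hA B hB, ?_, ?_⟩
    · simp [Finset.mem_symmDiff, he, heB]
    · ext x
      simp only [Finset.mem_union, Finset.mem_symmDiff]
      tauto
  · exact ⟨B, hB, heB, rfl⟩

lemma exists_cycle_cover_mem_unique (M : BinaryMatroid α) {A B C : Finset α} {e : α}
    (hA : A ∈ M.cycles) (hB : B ∈ M.cycles) (hC : C ∈ M.cycles) (he : e ∈ A ∪ B ∪ C) :
    ∃ A' B' C', A' ∈ M.cycles ∧ B' ∈ M.cycles ∧ C' ∈ M.cycles ∧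
      e ∈ A' ∧ e ∉ B' ∧ e ∉ C' ∧ A' ∪ B' ∪ C' = A ∪ B ∪ C := by
  suffices key : ∀ {A B C : Finset α}, A ∈ M.cycles → B ∈ M.cycles → C ∈ M.cycles → e ∈ A →
      ∃ A' B' C', A' ∈ M.cycles ∧ B' ∈ M.cycles ∧ C' ∈ M.cycles ∧
        e ∈ A' ∧ e ∉ B' ∧ e ∉ C' ∧ A' ∪ B' ∪ C' = A ∪ B ∪ C by
    simp only [Finset.mem_union] at he
    rcases he with (heA | heB) | heC
    · exact key hA hB hC heA
    · obtain ⟨A', B', C', h⟩ := key hB hA hC heB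
      exact ⟨A', B', C', by rw [Finset.union_comm A B]; exact h⟩
    · obtain ⟨A', B', C', h⟩ := key hC hB hA heC
      exact ⟨A', B', C', by rw [show A ∪ B ∪ C = C ∪ B ∪ A by ac_rfl]; exact h⟩
  intro A B C hA hB hC heA
  obtain ⟨B', hB', heB', hAB'⟩ := M.exists_cycle_not_mem_union_eq hA hB heA
  obtain ⟨C', hC', heC', hAC'⟩ := M.exists_cycle_not_mem_union_eq hA hC heA
  refine ⟨A, B', C', hA, hB', hC', heA, heB', heC', ?_⟩
  rw [Finset.union_right_comm, hAC', Finset.union_right_comm, hAB']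

end BinaryMatroid

lemma DeltaSum.symmDiff_mem_cycles {M M1 M2 : BinaryMatroid α} {e : α} {X Y : Finset α}
    (hsum : DeltaSum M M1 M2) (hE : M1.E ∩ M2.E = {e})
    (hX : X ∈ M1.cycles) (hY : Y ∈ M2.cycles) (he : e ∈ X ↔ e ∈ Y) :
    X ∆ Y ∈ M.cycles := by
  obtain ⟨hME, hMc⟩ := hsum
  rw [hMc, hME]
  refine ⟨Finset.symmDiff_subset_symmDiff (M1.subset_ground X hX) (M2.subset_ground Y hY) ?_,
    X, hX, Y, hY, rfl⟩
  intro x hx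
  rw [hE, Finset.mem_singleton] at hx
  exact hx ▸ he

theorem stmt_8_general (M M1 M2 : BinaryMatroid α) (e : α)
    (hE : M1.E ∩ M2.E = {e})
    (hsum : DeltaSum M M1 M2)
    (h1 : ∃ A B C, A ∈ M1.cycles ∧ B ∈ M1.cycles ∧ C ∈ M1.cycles ∧ A ∪ B ∪ C = M1.E)
    (h2 : ∃ A B C, A ∈ M2.cycles ∧ B ∈ M2.cycles ∧ C ∈ M2.cycles ∧ A ∪ B ∪ C = M2.E) :
    ∃ A B C, A ∈ M.cycles ∧ B ∈ M.cycles ∧ C ∈ M.cycles ∧ A ∪ B ∪ C = M.E := by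
  have he : e ∈ M1.E ∩ M2.E := hE ▸ Finset.mem_singleton_self e
  obtain ⟨A₁, B₁, C₁, hA₁, hB₁, hC₁, hU₁⟩ := h1
  obtain ⟨A₂, B₂, C₂, hA₂, hB₂, hC₂, hU₂⟩ := h2
  obtain ⟨A₁, B₁, C₁, hA₁, hB₁, hC₁, heA₁, heB₁, heC₁, hU₁'⟩ :=
    M1.exists_cycle_cover_mem_unique hA₁ hB₁ hC₁ (hU₁ ▸ (Finset.mem_inter.1 he).1)
  obtain ⟨A₂, B₂, C₂, hA₂, hB₂, hC₂, heA₂, heB₂, heC₂, hU₂'⟩ :=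
    M2.exists_cycle_cover_mem_unique hA₂ hB₂ hC₂ (hU₂ ▸ (Finset.mem_inter.1 he).2)
  have hA := hsum.symmDiff_mem_cycles hE hA₁ hA₂ (iff_of_true heA₁ heA₂)
  have hB := hsum.symmDiff_mem_cycles hE hB₁ hB₂ (iff_of_false heB₁ heB₂)
  have hC := hsum.symmDiff_mem_cycles hE hC₁ hC₂ (iff_of_false heC₁ heC₂)
  refine ⟨_, _, _, hA, hB, hC, Finset.Subset.antisymm ?_ ?_⟩
  · exact Finset.union_subset (Finset.union_subset (M.subset_ground _ hA)
      (M.subset_ground _ hB)) (M.subset_ground _ hC)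
  · rw [hsum.1, ← hU₁, ← hU₂, ← hU₁', ← hU₂']
    exact Finset.symmDiff_subset_union_symmDiff _ _ _ _ _ _

/-- If `M` is the 2-sum of `M1` and `M2` and each `Mi` has three cycles whose
union is its ground set, then so does `M`. -/
theorem stmt_8 (M M1 M2 : BinaryMatroid α) (e : α)
    (hE : M1.E ∩ M2.E = {e})
    (hl1 : ¬ M1.IsLoop e) (hl2 : ¬ M2.IsLoop e)
    (hc1 : ¬ M1.IsColoop e) (hc2 : ¬ M2.IsColoop e)
    (hsum : DeltaSum M M1 M2)
    (h1 : ∃ A B C, A ∈ M1.cycles ∧ B ∈ M1.cycles ∧ C ∈ M1.cycles ∧ A ∪ B ∪ C = M1.E)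
    (h2 : ∃ A B C, A ∈ M2.cycles ∧ B ∈ M2.cycles ∧ C ∈ M2.cycles ∧ A ∪ B ∪ C = M2.E) :
    ∃ A B C, A ∈ M.cycles ∧ B ∈ M.cycles ∧ C ∈ M.cycles ∧ A ∪ B ∪ C = M.E :=
  stmt_8_general M M1 M2 e hE hsum h1 h2
end

section
/- Let M1, M2 be binary matroids over ground sets E1, E2 such that E1 ∩ E2 is a cocircuit of cardinality 3 in both M1 and M2 and contains no circuit of M1 or M2, and let M = M1 Δ M2 be their Y-sum. If each of M1, M2 has a 3-cycle cover, then so does M. -/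
variable {α : Type*} [DecidableEq α]

/-- A circuit: a minimal nonempty cycle. -/
def BinaryMatroid.IsCircuit (M : BinaryMatroid α) (C : Finset α) : Prop :=
  C ∈ M.cycles ∧ C.Nonempty ∧ ∀ C' ∈ M.cycles, C'.Nonempty → C' ⊆ C → C' = C

/-- A cocycle: a subset of the ground set in the orthogonal complement of the cycle space,
i.e. meeting every cycle in an even number of elements. -/
def BinaryMatroid.IsCocycle (M : BinaryMatroid α) (D : Finset α) : Prop :=
  D ⊆ M.E ∧ ∀ C ∈ M.cycles, Even ((D ∩ C).card)

/-- A cocircuit: a minimal nonempty cocycle. -/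
def BinaryMatroid.IsCocircuit (M : BinaryMatroid α) (D : Finset α) : Prop :=
  M.IsCocycle D ∧ D.Nonempty ∧ ∀ D', M.IsCocycle D' → D'.Nonempty → D' ⊆ D → D' = D

theorem Finset.union_symmDiff_of_subset {S C D : Finset α} (hD : D ⊆ S) :
    S ∪ symmDiff C D = S ∪ C := by
  ext a
  have := @hD a
  simp only [Finset.mem_union, Finset.mem_symmDiff]
  tauto

theorem Finset.symmDiff_eq_union_sdiff_of_inter_eq {E₁ E₂ X₁ X₂ : Finset α} (h₁ : X₁ ⊆ E₁)
    (h₂ : X₂ ⊆ E₂) (h : E₁ ∩ E₂ ∩ X₁ = E₁ ∩ E₂ ∩ X₂) :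
    symmDiff X₁ X₂ = (X₁ ∪ X₂) \ (E₁ ∩ E₂) := by
  ext a
  have := @h₁ a
  have := @h₂ a
  have := Finset.ext_iff.mp h a
  simp only [Finset.mem_symmDiff, Finset.mem_sdiff, Finset.mem_union, Finset.mem_inter] at *
  tauto

theorem Finset.inter_symmDiff_distrib_left (s t u : Finset α) :
    s ∩ symmDiff t u = symmDiff (s ∩ t) (s ∩ u) :=
  inf_symmDiff_distrib_left s t u

theorem Finset.eq_or_eq_or_eq_symmDiff_of_card_eq_two {T u v s : Finset α} (hT : T.card = 3)
    (hu : u ⊆ T) (hv : v ⊆ T) (hs : s ⊆ T) (hu₂ : u.card = 2) (hv₂ : v.card = 2)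
    (hs₂ : s.card = 2) (huv : u ≠ v) : s = u ∨ s = v ∨ s = symmDiff u v := by
  obtain ⟨x, y, z, hxy, hxz, hyz, rfl⟩ := Finset.card_eq_three.mp hT
  have pair (w : Finset α) (hw : w ⊆ {x, y, z}) (hw₂ : w.card = 2) :
      w = {y, z} ∨ w = {x, z} ∨ w = {x, y} := by
    obtain ⟨a, b, hab, rfl⟩ := Finset.card_eq_two.mp hw₂
    simp only [Finset.insert_subset_iff, Finset.singleton_subset_iff, Finset.mem_insert,
      Finset.mem_singleton] at hw
    obtain ⟨ha | ha | ha, hb | hb | hb⟩ := hw <;> subst ha hb <;> simp_all [Finset.pair_comm]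
  rcases pair u hu hu₂ with rfl | rfl | rfl <;> rcases pair v hv hv₂ with rfl | rfl | rfl <;>
    rcases pair s hs hs₂ with rfl | rfl | rfl <;>
    simp_all [Finset.ext_iff, Finset.mem_symmDiff] <;> grind

theorem exists_ne_of_sup_eq {L : Type*} [SemilatticeSup L] [OrderBot L] {a b c t : L}
    (h : a ⊔ b ⊔ c = t) (ha : a ≠ t) (hb : b ≠ t) (hc : c ≠ t) :
    (a ≠ ⊥ ∧ b ≠ ⊥ ∧ a ≠ b) ∨ (a ≠ ⊥ ∧ c ≠ ⊥ ∧ a ≠ c) ∨ (b ≠ ⊥ ∧ c ≠ ⊥ ∧ b ≠ c) := by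
  rcases eq_or_ne a ⊥ with rfl | ha₀ <;> rcases eq_or_ne b ⊥ with rfl | hb₀ <;>
    rcases eq_or_ne c ⊥ with rfl | hc₀ <;> simp_all <;> grind

namespace BinaryMatroid

def IsThreeCycleCover (M : BinaryMatroid α) (A B C : Finset α) : Prop :=
  A ∈ M.cycles ∧ B ∈ M.cycles ∧ C ∈ M.cycles ∧ A ∪ B ∪ C = M.E

variable {M : BinaryMatroid α} {T A B C D u v : Finset α}

namespace IsCocycle

theorem inter_ne_self (hT : M.IsCocycle T) (hT₃ : T.card = 3) (hC : C ∈ M.cycles) :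
    T ∩ C ≠ T := by
  intro h
  have := hT.2 C hC
  rw [h, hT₃] at this
  exact Nat.not_even_iff_odd.mpr (by decide) this

theorem card_inter_eq_two (hT : M.IsCocycle T) (hT₃ : T.card = 3) (hC : C ∈ M.cycles)
    (hne : T ∩ C ≠ ∅) : (T ∩ C).card = 2 := by
  have hle : (T ∩ C).card ≤ 3 := hT₃ ▸ Finset.card_le_card Finset.inter_subset_left
  have hpos : (T ∩ C).card ≠ 0 := Finset.card_ne_zero.mpr (Finset.nonempty_iff_ne_empty.mpr hne)
  obtain ⟨k, hk⟩ := hT.2 C hC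
  omega

end IsCocycle

namespace IsThreeCycleCover

theorem swap₁₂ (h : M.IsThreeCycleCover A B C) : M.IsThreeCycleCover B A C :=
  ⟨h.2.1, h.1, h.2.2.1, by rw [Finset.union_comm B, h.2.2.2]⟩

theorem swap₂₃ (h : M.IsThreeCycleCover A B C) : M.IsThreeCycleCover A C B :=
  ⟨h.1, h.2.2.1, h.2.1, by rw [Finset.union_right_comm, h.2.2.2]⟩

theorem symmDiff_right (h : M.IsThreeCycleCover A B C) (hD : D ∈ M.cycles) (hDAB : D ⊆ A ∪ B) :
    M.IsThreeCycleCover A B (symmDiff C D) :=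
  ⟨h.1, h.2.1, M.symmDiff_mem _ h.2.2.1 _ hD,
    by rw [Finset.union_symmDiff_of_subset hDAB, h.2.2.2]⟩

theorem symmDiff_left (h : M.IsThreeCycleCover A B C) (hD : D ∈ M.cycles) (hDBC : D ⊆ B ∪ C) :
    M.IsThreeCycleCover (symmDiff A D) B C :=
  (h.swap₁₂.swap₂₃.symmDiff_right hD hDBC).swap₂₃.swap₁₂

theorem inter_union_inter_union_inter (h : M.IsThreeCycleCover A B C) (hT : M.IsCocycle T) :
    T ∩ A ∪ T ∩ B ∪ T ∩ C = T := by
  rw [← Finset.inter_union_distrib_left, ← Finset.inter_union_distrib_left, h.2.2.2,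
    Finset.inter_eq_left.mpr hT.1]

theorem exists_card_inter_eq_two_of_ne (h : M.IsThreeCycleCover A B C) (hT : M.IsCocycle T)
    (hT₃ : T.card = 3) :
    ∃ A' B' C', M.IsThreeCycleCover A' B' C' ∧ (T ∩ A').card = 2 ∧ (T ∩ B').card = 2 ∧
      T ∩ A' ≠ T ∩ B' := by
  have two {X : Finset α} (hX : X ∈ M.cycles) (hne : T ∩ X ≠ ∅) :=
    hT.card_inter_eq_two hT₃ hX hne
  rcases exists_ne_of_sup_eq (h.inter_union_inter_union_inter hT) (hT.inter_ne_self hT₃ h.1)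
      (hT.inter_ne_self hT₃ h.2.1) (hT.inter_ne_self hT₃ h.2.2.1) with
    ⟨ha, hb, hab⟩ | ⟨ha, hc, hac⟩ | ⟨hb, hc, hbc⟩
  · exact ⟨A, B, C, h, two h.1 ha, two h.2.1 hb, hab⟩
  · exact ⟨A, C, B, h.swap₂₃, two h.1 ha, two h.2.2.1 hc, hac⟩
  · exact ⟨B, C, A, h.swap₁₂.swap₂₃, two h.2.1 hb, two h.2.2.1 hc, hbc⟩

theorem exists_inter_left_eq (h : M.IsThreeCycleCover A B C) (hT₃ : T.card = 3)
    (ha : (T ∩ A).card = 2) (hb : (T ∩ B).card = 2) (hab : T ∩ A ≠ T ∩ B) (hu : u ⊆ T)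
    (hu₂ : u.card = 2) :
    ∃ A' B', M.IsThreeCycleCover A' B' C ∧ T ∩ A' = u ∧ (T ∩ B').card = 2 ∧ u ≠ T ∩ B' := by
  rcases Finset.eq_or_eq_or_eq_symmDiff_of_card_eq_two hT₃ Finset.inter_subset_left
      Finset.inter_subset_left hu ha hb hu₂ hab with rfl | rfl | rfl
  · exact ⟨A, B, h, rfl, hb, hab⟩
  · exact ⟨B, A, h.swap₁₂, rfl, ha, hab.symm⟩
  · refine ⟨symmDiff A B, B, h.symmDiff_left h.2.1 Finset.subset_union_left,
      Finset.inter_symmDiff_distrib_left _ _ _, hb, ?_⟩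
    rw [Ne, symmDiff_eq_right, Finset.bot_eq_empty, ← Finset.card_eq_zero, ha]
    decide

theorem exists_inter_middle_eq (h : M.IsThreeCycleCover A B C) (hT₃ : T.card = 3)
    (ha : (T ∩ A).card = 2) (hb : (T ∩ B).card = 2) (hab : T ∩ A ≠ T ∩ B) (hv : v ⊆ T)
    (hv₂ : v.card = 2) (hav : T ∩ A ≠ v) :
    ∃ B', M.IsThreeCycleCover A B' C ∧ T ∩ B' = v := by
  rcases Finset.eq_or_eq_or_eq_symmDiff_of_card_eq_two hT₃ Finset.inter_subset_left
      Finset.inter_subset_left hv ha hb hv₂ hab with rfl | rfl | rfl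
  · exact absurd rfl hav
  · exact ⟨B, h, rfl⟩
  · exact ⟨symmDiff B A, (h.swap₁₂.symmDiff_left h.1 Finset.subset_union_left).swap₁₂,
      by rw [Finset.inter_symmDiff_distrib_left, symmDiff_comm]⟩

theorem exists_inter_right_eq (h : M.IsThreeCycleCover A B C) (hT : M.IsCocycle T)
    (hT₃ : T.card = 3) (ha : (T ∩ A).card = 2) (hb : (T ∩ B).card = 2) (hab : T ∩ A ≠ T ∩ B) :
    ∃ C', M.IsThreeCycleCover A B C' ∧ T ∩ C' = symmDiff (T ∩ A) (T ∩ B) := by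
  by_cases hc : T ∩ C = ∅
  · refine ⟨symmDiff C (symmDiff A B),
      h.symmDiff_right (M.symmDiff_mem _ h.1 _ h.2.1) symmDiff_le_sup, ?_⟩
    rw [Finset.inter_symmDiff_distrib_left, hc, Finset.inter_symmDiff_distrib_left]
    exact bot_symmDiff _
  rcases Finset.eq_or_eq_or_eq_symmDiff_of_card_eq_two hT₃ Finset.inter_subset_left
      Finset.inter_subset_left Finset.inter_subset_left ha hb
      (hT.card_inter_eq_two hT₃ h.2.2.1 hc) hab with hca | hcb | hcab
  · exact ⟨symmDiff C B, h.symmDiff_right h.2.1 Finset.subset_union_right,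
      by rw [Finset.inter_symmDiff_distrib_left, hca]⟩
  · exact ⟨symmDiff C A, h.symmDiff_right h.1 Finset.subset_union_left,
      by rw [Finset.inter_symmDiff_distrib_left, hcb, symmDiff_comm]⟩
  · exact ⟨C, h, hcab⟩

end IsThreeCycleCover

theorem IsCocycle.exists_isThreeCycleCover_inter_eq (hT : M.IsCocycle T) (hT₃ : T.card = 3)
    (hM : ∃ A B C, M.IsThreeCycleCover A B C) (hu : u ⊆ T) (hv : v ⊆ T) (hu₂ : u.card = 2)
    (hv₂ : v.card = 2) (huv : u ≠ v) :
    ∃ A B C, M.IsThreeCycleCover A B C ∧ T ∩ A = u ∧ T ∩ B = v ∧ T ∩ C = symmDiff u v := by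
  obtain ⟨A, B, C, h⟩ := hM
  obtain ⟨A, B, C, h, ha, hb, hab⟩ := h.exists_card_inter_eq_two_of_ne hT hT₃
  obtain ⟨A, B, h, rfl, hb, hab⟩ := h.exists_inter_left_eq hT₃ ha hb hab hu hu₂
  obtain ⟨B, h, rfl⟩ := h.exists_inter_middle_eq hT₃ hu₂ hb hab hv hv₂ huv
  obtain ⟨C, h, hc⟩ := h.exists_inter_right_eq hT hT₃ hu₂ hv₂ huv
  exact ⟨A, B, C, h, rfl, rfl, hc⟩

end BinaryMatroid

theorem DeltaSum.symmDiff_mem_cycles_s9 {M M₁ M₂ : BinaryMatroid α} {C₁ C₂ : Finset α}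
    (hsum : DeltaSum M M₁ M₂) (hC₁ : C₁ ∈ M₁.cycles) (hC₂ : C₂ ∈ M₂.cycles)
    (h : M₁.E ∩ M₂.E ∩ C₁ = M₁.E ∩ M₂.E ∩ C₂) : symmDiff C₁ C₂ ∈ M.cycles := by
  have hE₁ := M₁.subset_ground C₁ hC₁
  have hE₂ := M₂.subset_ground C₂ hC₂
  rw [hsum.2]
  refine ⟨?_, C₁, hC₁, C₂, hC₂, rfl⟩
  rw [hsum.1, symmDiff_eq_sup_sdiff_inf M₁.E,
    Finset.symmDiff_eq_union_sdiff_of_inter_eq hE₁ hE₂ h]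
  exact Finset.sdiff_subset_sdiff (Finset.union_subset_union hE₁ hE₂) le_rfl

theorem DeltaSum.isThreeCycleCover {M M₁ M₂ : BinaryMatroid α} {A₁ B₁ C₁ A₂ B₂ C₂ : Finset α}
    (hsum : DeltaSum M M₁ M₂) (h₁ : M₁.IsThreeCycleCover A₁ B₁ C₁)
    (h₂ : M₂.IsThreeCycleCover A₂ B₂ C₂) (hA : M₁.E ∩ M₂.E ∩ A₁ = M₁.E ∩ M₂.E ∩ A₂)
    (hB : M₁.E ∩ M₂.E ∩ B₁ = M₁.E ∩ M₂.E ∩ B₂) (hC : M₁.E ∩ M₂.E ∩ C₁ = M₁.E ∩ M₂.E ∩ C₂) :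
    M.IsThreeCycleCover (symmDiff A₁ A₂) (symmDiff B₁ B₂) (symmDiff C₁ C₂) := by
  refine ⟨DeltaSum.symmDiff_mem_cycles_s9 hsum h₁.1 h₂.1 hA,
    DeltaSum.symmDiff_mem_cycles_s9 hsum h₁.2.1 h₂.2.1 hB,
    DeltaSum.symmDiff_mem_cycles_s9 hsum h₁.2.2.1 h₂.2.2.1 hC, ?_⟩
  have ground₁ {X} (hX : X ∈ M₁.cycles) := M₁.subset_ground X hX
  have ground₂ {X} (hX : X ∈ M₂.cycles) := M₂.subset_ground X hX
  rw [Finset.symmDiff_eq_union_sdiff_of_inter_eq (ground₁ h₁.1) (ground₂ h₂.1) hA,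
    Finset.symmDiff_eq_union_sdiff_of_inter_eq (ground₁ h₁.2.1) (ground₂ h₂.2.1) hB,
    Finset.symmDiff_eq_union_sdiff_of_inter_eq (ground₁ h₁.2.2.1) (ground₂ h₂.2.2.1) hC,
    ← Finset.union_sdiff_distrib, ← Finset.union_sdiff_distrib,
    Finset.union_union_union_comm A₁, Finset.union_union_union_comm (A₁ ∪ B₁), h₁.2.2.2,
    h₂.2.2.2, hsum.1]
  exact (symmDiff_eq_sup_sdiff_inf _ _).symm

theorem stmt_9_general (M M1 M2 : BinaryMatroid α)
    (hco1 : M1.IsCocircuit (M1.E ∩ M2.E)) (hco2 : M2.IsCocircuit (M1.E ∩ M2.E))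
    (hcard : (M1.E ∩ M2.E).card = 3)
    (hsum : DeltaSum M M1 M2)
    (h1 : ∃ A B C, A ∈ M1.cycles ∧ B ∈ M1.cycles ∧ C ∈ M1.cycles ∧ A ∪ B ∪ C = M1.E)
    (h2 : ∃ A B C, A ∈ M2.cycles ∧ B ∈ M2.cycles ∧ C ∈ M2.cycles ∧ A ∪ B ∪ C = M2.E) :
    ∃ A B C, A ∈ M.cycles ∧ B ∈ M.cycles ∧ C ∈ M.cycles ∧ A ∪ B ∪ C = M.E := by
  set T := M1.E ∩ M2.E
  obtain ⟨x, hx, y, hy, hxy⟩ := Finset.one_lt_card.mp (by omega : 1 < T.card)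
  have hu₂ : (T.erase x).card = 2 := by rw [Finset.card_erase_of_mem hx, hcard]
  have hv₂ : (T.erase y).card = 2 := by rw [Finset.card_erase_of_mem hy, hcard]
  have huv : T.erase x ≠ T.erase y := fun h =>
    Finset.notMem_erase x T (h ▸ Finset.mem_erase.mpr ⟨hxy, hx⟩)
  obtain ⟨A₁, B₁, C₁, hcover₁, hA₁, hB₁, hC₁⟩ :=
    hco1.1.exists_isThreeCycleCover_inter_eq hcard h1 (T.erase_subset x) (T.erase_subset y)
      hu₂ hv₂ huv
  obtain ⟨A₂, B₂, C₂, hcover₂, hA₂, hB₂, hC₂⟩ :=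
    hco2.1.exists_isThreeCycleCover_inter_eq hcard h2 (T.erase_subset x) (T.erase_subset y)
      hu₂ hv₂ huv
  exact ⟨_, _, _, DeltaSum.isThreeCycleCover hsum hcover₁ hcover₂ (hA₁.trans hA₂.symm)
    (hB₁.trans hB₂.symm) (hC₁.trans hC₂.symm)⟩

/-- If `M` is the Y-sum of `M1` and `M2` (their ground sets meeting in a common
cocircuit of cardinality 3 containing no circuit of either) and each `Mi` has a 3-cycle cover,
then so does `M`. -/
theorem stmt_9 (M M1 M2 : BinaryMatroid α)
    (hco1 : M1.IsCocircuit (M1.E ∩ M2.E)) (hco2 : M2.IsCocircuit (M1.E ∩ M2.E))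
    (hcard : (M1.E ∩ M2.E).card = 3)
    (hnc1 : ¬ ∃ C, M1.IsCircuit C ∧ C ⊆ M1.E ∩ M2.E)
    (hnc2 : ¬ ∃ C, M2.IsCircuit C ∧ C ⊆ M1.E ∩ M2.E)
    (hsum : DeltaSum M M1 M2)
    (h1 : ∃ A B C, A ∈ M1.cycles ∧ B ∈ M1.cycles ∧ C ∈ M1.cycles ∧ A ∪ B ∪ C = M1.E)
    (h2 : ∃ A B C, A ∈ M2.cycles ∧ B ∈ M2.cycles ∧ C ∈ M2.cycles ∧ A ∪ B ∪ C = M2.E) :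
    ∃ A B C, A ∈ M.cycles ∧ B ∈ M.cycles ∧ C ∈ M.cycles ∧ A ∪ B ∪ C = M.E :=
  stmt_9_general M M1 M2 hco1 hco2 hcard hsum h1 h2
end

section
/- Let M be a binary matroid such that M = M1 Δ M2, where Δ is a 1-sum, 2-sum, or Y-sum of binary matroids M1 and M2. If M has no coloop, then neither M1 nor M2 has a coloop. -/
variable {α : Type*} [DecidableEq α]

/-
A coloop `e` of `M1` that `M2` does not see stays a coloop of `M1 Δ M2`: every cycle `C1 Δ C2`
avoids `e`, since `C1` does by assumption and `C2 ⊆ M2.E`. So it suffices that no element shared by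
`M1` and `M2` is a coloop. For a 1-sum there is no shared element, for a 2-sum this is assumed, and
for a Y-sum a coloop `e` in the common cocircuit `D` would make `{e}` a smaller nonempty cocycle.
-/

theorem DeltaSum.symm {M M1 M2 : BinaryMatroid α} (h : DeltaSum M M1 M2) : DeltaSum M M2 M1 := by
  obtain ⟨hE, hcycles⟩ := h
  refine ⟨hE.trans (symmDiff_comm _ _), hcycles.trans (Set.ext fun C => ?_)⟩
  constructor
  · rintro ⟨hC, C1, hC1, C2, hC2, rfl⟩
    exact ⟨hC, C2, hC2, C1, hC1, symmDiff_comm C1 C2⟩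
  · rintro ⟨hC, C2, hC2, C1, hC1, rfl⟩
    exact ⟨hC, C1, hC1, C2, hC2, symmDiff_comm C2 C1⟩

theorem DeltaSum.isColoop_of_isColoop_left {M M1 M2 : BinaryMatroid α} {e : α}
    (h : DeltaSum M M1 M2) (he : M1.IsColoop e) (he2 : e ∉ M2.E) : M.IsColoop e := by
  obtain ⟨hE, hcycles⟩ := h
  refine ⟨hE ▸ Finset.mem_symmDiff.mpr (Or.inl ⟨he.1, he2⟩), fun C hC => ?_⟩
  rw [hcycles] at hC
  obtain ⟨-, C1, hC1, C2, hC2, rfl⟩ := hC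
  have hC2e : e ∉ C2 := fun heC2 => he2 (M2.subset_ground C2 hC2 heC2)
  simp [Finset.mem_symmDiff, he.2 C1 hC1, hC2e]

theorem DeltaSum.not_exists_isColoop_left {M M1 M2 : BinaryMatroid α} (h : DeltaSum M M1 M2)
    (hM : ¬ ∃ e, M.IsColoop e) (hshared : ∀ e ∈ M1.E ∩ M2.E, ¬ M1.IsColoop e) :
    ¬ ∃ e, M1.IsColoop e := by
  rintro ⟨e, he⟩
  have he2 : e ∉ M2.E := fun he2 => hshared e (Finset.mem_inter.mpr ⟨he.1, he2⟩) he
  exact hM ⟨e, h.isColoop_of_isColoop_left he he2⟩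

theorem BinaryMatroid.IsColoop.isCocycle_singleton {M : BinaryMatroid α} {e : α}
    (he : M.IsColoop e) : M.IsCocycle {e} := by
  refine ⟨Finset.singleton_subset_iff.mpr he.1, fun C hC => ?_⟩
  simp [Finset.singleton_inter_of_notMem (he.2 C hC)]

theorem BinaryMatroid.IsCocircuit.not_isColoop_of_mem {M : BinaryMatroid α} {D : Finset α}
    {e : α} (hD : M.IsCocircuit D) (hcard : 1 < D.card) (heD : e ∈ D) : ¬ M.IsColoop e := by
  intro he
  have hDe : {e} = D := hD.2.2 {e} he.isCocycle_singleton (Finset.singleton_nonempty e)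
    (Finset.singleton_subset_iff.mpr heD)
  simp [← hDe] at hcard

/-- If `M = M1 Δ M2` is a 1-sum, 2-sum or Y-sum and `M` has no coloop, then
neither `M1` nor `M2` has a coloop. -/
theorem stmt_11 (M M1 M2 : BinaryMatroid α)
    (hsum : DeltaSum M M1 M2)
    (hcase :
      Disjoint M1.E M2.E ∨
      (∃ e, M1.E ∩ M2.E = {e} ∧ ¬ M1.IsLoop e ∧ ¬ M2.IsLoop e ∧
        ¬ M1.IsColoop e ∧ ¬ M2.IsColoop e) ∨
      (M1.IsCocircuit (M1.E ∩ M2.E) ∧ M2.IsCocircuit (M1.E ∩ M2.E) ∧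
        (M1.E ∩ M2.E).card = 3 ∧
        (¬ ∃ C, M1.IsCircuit C ∧ C ⊆ M1.E ∩ M2.E) ∧
        (¬ ∃ C, M2.IsCircuit C ∧ C ⊆ M1.E ∩ M2.E)))
    (hM : ¬ ∃ e, M.IsColoop e) :
    (¬ ∃ e, M1.IsColoop e) ∧ (¬ ∃ e, M2.IsColoop e) := by
  have hshared : ∀ e ∈ M1.E ∩ M2.E, ¬ M1.IsColoop e ∧ ¬ M2.IsColoop e := by
    intro e he
    rcases hcase with hdisj | ⟨f, hf, -, -, hf1, hf2⟩ | ⟨hD1, hD2, hcard, -, -⟩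
    · simp [Finset.disjoint_iff_inter_eq_empty.mp hdisj] at he
    · rw [hf, Finset.mem_singleton] at he
      exact he ▸ ⟨hf1, hf2⟩
    · exact ⟨hD1.not_isColoop_of_mem (by omega) he, hD2.not_isColoop_of_mem (by omega) he⟩
  refine ⟨hsum.not_exists_isColoop_left hM fun e he => (hshared e he).1,
    hsum.symm.not_exists_isColoop_left hM fun e he => (hshared e ?_).2⟩
  rwa [Finset.inter_comm]
end

section
/- Let M be a simple binary matroid on ground set E in which every two distinct elements appear together in a triangle (a circuit of cardinality three). Then M is a projective geometry over GF(2); that is, for some r, M is isomorphic to the binary matroid represented by the matrix whose columns are all the 2^r - 1 nonzero vectors of GF(2)^r. -/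
variable {α : Type*} [DecidableEq α]

/-!
Quotient the space `GF(2)^E` by the cycle space and identify the quotient with `GF(2)^r`:
the images `φ e` of the unit vectors then represent `M`, so its cycles are exactly the sets whose
vectors sum to zero. Simplicity makes `φ` injective with nonzero values, and a triangle `{e, f, g}`
gives `φ e + φ f = φ g`, so the image of `φ` is a spanning set closed under sums of distinct
elements. Over `GF(2)` such a set together with `0` is a subspace, hence it is the whole space,
and the image of `φ` consists of all nonzero vectors.
-/

open Finset

def ZModModule.insertZeroAddSubgroup {V : Type*} [AddCommGroup V] [Module (ZMod 2) V] (S : Set V)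
    (hS : ∀ v ∈ S, ∀ w ∈ S, v ≠ w → v + w ∈ S) : AddSubgroup V where
  carrier := insert 0 S
  zero_mem' := Or.inl rfl
  neg_mem' {v} hv := by rwa [ZModModule.neg_eq_self]
  add_mem' {v w} hv hw := by
    rcases hv with rfl | hv
    · rwa [zero_add]
    rcases hw with rfl | hw
    · exact (add_zero v).symm ▸ Or.inr hv
    by_cases hvw : v = w
    · exact Or.inl (hvw ▸ ZModModule.add_self v)
    · exact Or.inr (hS v hv w hw hvw)

lemma ZModModule.coe_span_eq_insert_zero {V : Type*} [AddCommGroup V] [Module (ZMod 2) V]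
    {S : Set V} (hS : ∀ v ∈ S, ∀ w ∈ S, v ≠ w → v + w ∈ S) :
    (Submodule.span (ZMod 2) S : Set V) = insert 0 S :=
  subset_antisymm
    (Submodule.span_le (p := AddSubgroup.toZModSubmodule 2 (insertZeroAddSubgroup S hS)).mpr
      (Set.subset_insert 0 S))
    (Set.insert_subset (Submodule.zero_mem _) Submodule.subset_span)

lemma Submodule.exists_linearMap_surjective_ker_eq {K V : Type*} [Field K] [AddCommGroup V]
    [Module K V] [FiniteDimensional K V] (Z : Submodule K V) :
    ∃ (r : ℕ) (L : V →ₗ[K] Fin r → K), Function.Surjective L ∧ LinearMap.ker L = Z :=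
  let e := (Module.finBasis K (V ⧸ Z)).equivFun
  ⟨_, e.toLinearMap ∘ₗ Z.mkQ, e.surjective.comp Z.mkQ_surjective,
    by rw [LinearEquiv.ker_comp, Submodule.ker_mkQ]⟩

namespace BinaryMatroid

variable (M : BinaryMatroid α)

lemma exists_isCircuit_subset {C : Finset α} (hC : C ∈ M.cycles) (hne : C.Nonempty) :
    ∃ D ⊆ C, M.IsCircuit D := by
  induction C using Finset.strongInduction with
  | _ C ih =>
    by_cases hmin : ∀ C' ∈ M.cycles, C'.Nonempty → C' ⊆ C → C' = C
    · exact ⟨C, Subset.refl C, hC, hne, hmin⟩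
    push Not at hmin
    obtain ⟨C', hC', hne', hsub, hne2⟩ := hmin
    obtain ⟨D, hDC', hD⟩ := ih C' (Finset.ssubset_iff_subset_ne.mpr ⟨hsub, hne2⟩) hC' hne'
    exact ⟨D, hDC'.trans hsub, hD⟩

lemma two_lt_card_of_mem_cycles (hsimple : ∀ C, M.IsCircuit C → 2 < C.card) {C : Finset α}
    (hC : C ∈ M.cycles) (hne : C.Nonempty) : 2 < C.card := by
  obtain ⟨D, hDC, hD⟩ := M.exists_isCircuit_subset hC hne
  exact (hsimple D hD).trans_le (card_le_card hDC)

def indicator (C : Finset α) : M.E → ZMod 2 := fun x => if (x : α) ∈ C then 1 else 0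

lemma indicator_symmDiff (C D : Finset α) :
    M.indicator (symmDiff C D) = M.indicator C + M.indicator D := by
  funext x
  simp only [indicator, mem_symmDiff, Pi.add_apply]
  split_ifs <;> simp_all
  decide

lemma eq_of_indicator_eq {C D : Finset α} (hC : C ⊆ M.E) (hD : D ⊆ M.E)
    (h : M.indicator C = M.indicator D) : C = D := by
  have key : ∀ a (ha : a ∈ M.E), a ∈ C ↔ a ∈ D := fun a ha => by
    have := congrFun h ⟨a, ha⟩
    simp only [indicator] at this
    split_ifs at this <;> simp_all
  ext a
  exact ⟨fun ha => (key a (hC ha)).1 ha, fun ha => (key a (hD ha)).2 ha⟩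

lemma sum_indicator_singleton (C : Finset α) : ∑ x ∈ C, M.indicator {x} = M.indicator C := by
  funext y
  simp only [Finset.sum_apply, indicator, mem_singleton]
  exact sum_ite_eq C (y : α) fun _ => 1

lemma indicator_singleton_coe (x : M.E) : M.indicator {(x : α)} = Pi.single x 1 := by
  funext y
  simp only [indicator, mem_singleton, Pi.single_apply, Subtype.ext_iff]

def cycleSpace : Submodule (ZMod 2) (M.E → ZMod 2) :=
  AddSubgroup.toZModSubmodule 2
    { carrier := M.indicator '' M.cycles
      add_mem' := by
        rintro _ _ ⟨C, hC, rfl⟩ ⟨D, hD, rfl⟩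
        exact ⟨symmDiff C D, M.symmDiff_mem C hC D hD, M.indicator_symmDiff C D⟩
      zero_mem' := ⟨∅, M.empty_mem, by funext x; simp [indicator]⟩
      neg_mem' := by
        intro v hv
        rwa [ZModModule.neg_eq_self] }

lemma indicator_mem_cycleSpace_iff {C : Finset α} (hC : C ⊆ M.E) :
    M.indicator C ∈ M.cycleSpace ↔ C ∈ M.cycles := by
  refine ⟨?_, fun h => ⟨C, h, rfl⟩⟩
  rintro ⟨D, hD, hDC⟩
  rwa [M.eq_of_indicator_eq (M.subset_ground D hD) hC hDC] at hD

def Represents {V : Type*} [AddCommMonoid V] (φ : α → V) : Prop :=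
  ∀ C ⊆ M.E, C ∈ M.cycles ↔ ∑ x ∈ C, φ x = 0

lemma exists_represents_span_eq_top :
    ∃ (r : ℕ) (φ : α → Fin r → ZMod 2),
      M.Represents φ ∧ Submodule.span (ZMod 2) (φ '' M.E) = ⊤ := by
  obtain ⟨r, L, hLsurj, hLker⟩ := M.cycleSpace.exists_linearMap_surjective_ker_eq
  set φ : α → Fin r → ZMod 2 := fun a => L (M.indicator {a})
  refine ⟨r, φ, fun C hC => ?_, ?_⟩
  · rw [← map_sum, M.sum_indicator_singleton, ← LinearMap.mem_ker, hLker,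
      M.indicator_mem_cycleSpace_iff hC]
  · have himage : φ '' M.E = Set.range (L ∘ Pi.basisFun (ZMod 2) M.E) := by
      ext v
      simp only [Set.mem_image, Set.mem_range, mem_coe, Function.comp_apply, Pi.basisFun_apply,
        ← indicator_singleton_coe, φ]
      constructor
      · rintro ⟨a, ha, rfl⟩
        exact ⟨⟨a, ha⟩, rfl⟩
      · rintro ⟨x, rfl⟩
        exact ⟨x, x.2, rfl⟩
    rw [himage, Set.range_comp, Submodule.span_image, Module.Basis.span_eq, Submodule.map_top,
      LinearMap.range_eq_top.mpr hLsurj]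

variable {M}

lemma Represents.ne_zero {V : Type*} [AddCommMonoid V] {φ : α → V} (hφ : M.Represents φ)
    (hsimple : ∀ C, M.IsCircuit C → 2 < C.card) {a : α} (ha : a ∈ M.E) : φ a ≠ 0 := by
  intro h0
  have hcyc : {a} ∈ M.cycles := (hφ {a} (singleton_subset_iff.mpr ha)).mpr (by simpa using h0)
  simpa using M.two_lt_card_of_mem_cycles hsimple hcyc (singleton_nonempty a)

section Represents

variable {V : Type*} [AddCommGroup V] [Module (ZMod 2) V] {φ : α → V}

lemma Represents.injOn (hφ : M.Represents φ) (hsimple : ∀ C, M.IsCircuit C → 2 < C.card) :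
    Set.InjOn φ M.E := by
  intro a ha b hb hab
  by_contra hne
  have hpair : {a, b} ⊆ M.E := insert_subset ha (singleton_subset_iff.mpr hb)
  have hcyc : {a, b} ∈ M.cycles := by
    rw [hφ _ hpair, sum_pair hne, hab, ZModModule.add_self]
  have := M.two_lt_card_of_mem_cycles hsimple hcyc (insert_nonempty a {b})
  have := card_le_two (a := a) (b := b)
  omega

lemma Represents.add_mem_image (hφ : M.Represents φ)
    (htri : ∀ e ∈ M.E, ∀ f ∈ M.E, e ≠ f →
      ∃ C, M.IsCircuit C ∧ C.card = 3 ∧ e ∈ C ∧ f ∈ C) :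
    ∀ v ∈ φ '' M.E, ∀ w ∈ φ '' M.E, v ≠ w → v + w ∈ φ '' M.E := by
  rintro _ ⟨a, ha, rfl⟩ _ ⟨b, hb, rfl⟩ hab
  obtain ⟨C, hC, hcard, haC, hbC⟩ := htri a ha b hb (ne_of_apply_ne φ hab)
  have hpair : {a, b} ⊆ C := insert_subset haC (singleton_subset_iff.mpr hbC)
  obtain ⟨c, hc⟩ : ∃ c, C \ {a, b} = {c} := by
    rw [← card_eq_one, card_sdiff_of_subset hpair, hcard, card_pair (ne_of_apply_ne φ hab)]
  have hcC : c ∈ C := (mem_sdiff.mp (hc ▸ mem_singleton_self c)).1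
  have hsum : ∑ x ∈ C, φ x = 0 := (hφ C (M.subset_ground C hC.1)).mp hC.1
  rw [← sum_sdiff hpair, hc, sum_singleton, sum_pair (ne_of_apply_ne φ hab),
    add_comm, ← ZModModule.sub_eq_add, sub_eq_zero] at hsum
  exact ⟨c, M.subset_ground C hC.1 hcC, hsum.symm⟩

end Represents

end BinaryMatroid

/-- A simple binary matroid in which every two distinct elements lie together in
a triangle (a circuit of cardinality 3) is a projective geometry over GF(2): for some `r` it is
isomorphic to the binary matroid represented by the matrix whose columns are all nonzero
vectors of `GF(2)^r` (so cycles correspond to sets of column vectors summing to zero). -/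
theorem stmt_12 (M : BinaryMatroid α)
    (hsimple : ∀ C, M.IsCircuit C → 2 < C.card)
    (htri : ∀ e ∈ M.E, ∀ f ∈ M.E, e ≠ f →
      ∃ C, M.IsCircuit C ∧ C.card = 3 ∧ e ∈ C ∧ f ∈ C) :
    ∃ (r : ℕ) (φ : α → (Fin r → ZMod 2)),
      Set.InjOn φ ↑M.E ∧
      φ '' ↑M.E = {v : Fin r → ZMod 2 | v ≠ 0} ∧
      ∀ C ⊆ M.E, (C ∈ M.cycles ↔ ∑ x ∈ C, φ x = 0) := by
  obtain ⟨r, φ, hφ, hspan⟩ := M.exists_represents_span_eq_top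
  have hinsert : insert 0 (φ '' M.E) = Set.univ := by
    rw [← ZModModule.coe_span_eq_insert_zero (hφ.add_mem_image htri), hspan, Submodule.top_coe]
  refine ⟨r, φ, hφ.injOn hsimple, subset_antisymm ?_ fun v hv => ?_, hφ⟩
  · rintro _ ⟨a, ha, rfl⟩
    exact hφ.ne_zero hsimple ha
  · exact (Set.eq_univ_iff_forall.mp hinsert v).resolve_left hv
end

section
/- The cocycle space S of PG(l-1,2) contains l+1 points that do not all agree on any coordinate; equivalently, the cuboid of S has l+1 members without a common element. -/
/-- The ground set of `PG(l-1,2)`: the nonzero vectors of `GF(2)^l`. -/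
abbrev PGpt (l : ℕ) := {v : Fin l → ZMod 2 // v ≠ 0}

/-- The cocycle space of `PG(l-1,2)`, viewed as a set of 0-1 points indexed by the ground
set: the row space of the representation matrix, i.e. all maps `v ↦ u · v`. -/
def PGcocycleSpace (l : ℕ) : Set (PGpt l → ZMod 2) :=
  {p | ∃ u : Fin l → ZMod 2, ∀ v : PGpt l, p v = ∑ i, u i * v.1 i}

/-- The `i`-th coordinate map as a point of the cuboid. -/
def PGrow (l : ℕ) (i : Fin l) : PGpt l → ZMod 2 := fun v => v.1 i

/-- The `i`-th standard basis vector, as a point of `PG(l-1,2)`. -/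
def PGe (l : ℕ) (i : Fin l) : PGpt l :=
  ⟨Pi.single i 1, by
    intro h
    have := congrFun h i
    simp at this⟩

lemma PGrow_inj (l : ℕ) : Function.Injective (PGrow l) := by
  intro i j hij
  have := congrFun hij (PGe l i)
  simp [PGrow, PGe, Pi.single_apply] at this
  by_contra hne
  exact hne this.symm

/-- The cocycle space of `PG(l-1,2)` contains `l+1` points that do not all
agree on any coordinate (equivalently, the cuboid of the cocycle space has `l+1` members
without a common element). -/
theorem stmt_15 (l : ℕ) (hl : 1 ≤ l) :
    ∃ T : Finset (PGpt l → ZMod 2),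
      ↑T ⊆ PGcocycleSpace l ∧ T.card = l + 1 ∧
      ¬ ∃ (v : PGpt l) (a : ZMod 2), ∀ p ∈ T, p v = a := by
  refine ⟨insert 0 (Finset.univ.image (PGrow l)), ?_, ?_, ?_⟩
  · intro p hp
    simp only [Finset.coe_insert, Set.mem_insert_iff, Finset.coe_image,
      Finset.coe_univ, Set.image_univ, Set.mem_range] at hp
    rcases hp with rfl | ⟨i, rfl⟩
    · exact ⟨0, fun v => by simp⟩
    · refine ⟨Pi.single i 1, fun v => ?_⟩
      simp [PGrow, Pi.single_apply, ite_mul]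
  · have h0 : (0 : PGpt l → ZMod 2) ∉ Finset.univ.image (PGrow l) := by
      simp only [Finset.mem_image, Finset.mem_univ, true_and]
      rintro ⟨i, hi⟩
      have := congrFun hi (PGe l i)
      simp [PGrow, PGe] at this
    rw [Finset.card_insert_of_notMem h0,
      Finset.card_image_of_injective _ (PGrow_inj l)]
    simp
  · rintro ⟨v, a, h⟩
    have h0 : a = 0 := by
      have := h 0 (Finset.mem_insert_self _ _)
      simpa using this.symm
    obtain ⟨i, hi⟩ : ∃ i, v.1 i ≠ 0 := by
      by_contra hc
      push_neg at hc
      exact v.2 (funext hc)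
    have := h (PGrow l i) (Finset.mem_insert_of_mem (Finset.mem_image_of_mem _ (Finset.mem_univ i)))
    exact hi (this.trans h0)
end

section
/- Let C be a binary tangled clutter over ground set V. If {e,f} is a minimum cover of C, then every member of C contains exactly one of e and f. Consequently, if {e,f} and {e,g} are both minimum covers, then f and g are duplicated elements (they belong to exactly the same members). -/
section

variable {V : Type*} [DecidableEq V]

theorem odd_card_inter_pair_iff {x y : V} (hxy : x ≠ y) (A : Finset V) :
    Odd (A ∩ {x, y}).card ↔ (x ∈ A ↔ y ∉ A) := by
  by_cases hx : x ∈ A <;> by_cases hy : y ∈ A <;>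
    simp [Finset.inter_insert_of_mem, Finset.inter_insert_of_notMem, hx, hy, hxy]

theorem eq_of_subset_of_isCover_of_card_le {C : Finset (Finset V)} {B : Finset V}
    (hmin : ∀ B', IsCover C B' → B.card ≤ B'.card) :
    ∀ B' ⊆ B, IsCover C B' → B' = B :=
  fun B' hsub hcov => Finset.eq_of_subset_of_card_le hsub (hmin B' hcov)

theorem mem_iff_notMem_of_isCover_pair {C : Finset (Finset V)}
    (hbinary : ∀ A ∈ C, ∀ B : Finset V, IsCover C B →
      (∀ B' ⊆ B, IsCover C B' → B' = B) → Odd ((A ∩ B).card))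
    (htau : ∀ B : Finset V, IsCover C B → 2 ≤ B.card)
    {x y : V} (hxy : x ≠ y) (hcov : IsCover C {x, y}) :
    ∀ A ∈ C, (x ∈ A ↔ y ∉ A) := by
  have hcard : ({x, y} : Finset V).card = 2 := Finset.card_pair hxy
  intro A hA
  refine (odd_card_inter_pair_iff hxy A).mp (hbinary A hA _ hcov ?_)
  exact eq_of_subset_of_isCover_of_card_le fun B' hB' => hcard ▸ htau B' hB'

end

theorem stmt_16_general {V : Type*} [DecidableEq V] (C : Finset (Finset V))
    (hbinary : ∀ A ∈ C, ∀ B : Finset V, IsCover C B →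
      (∀ B' ⊆ B, IsCover C B' → B' = B) → Odd ((A ∩ B).card))
    (htau : (∀ B : Finset V, IsCover C B → 2 ≤ B.card) ∧
      ∃ B : Finset V, IsCover C B ∧ B.card = 2)
    (e f g : V) (hef : e ≠ f) (heg : e ≠ g)
    (hcov_ef : IsCover C {e, f}) (hcov_eg : IsCover C {e, g}) :
    (∀ A ∈ C, (e ∈ A ↔ f ∉ A)) ∧ (∀ A ∈ C, (f ∈ A ↔ g ∈ A)) := by
  have hf := mem_iff_notMem_of_isCover_pair hbinary htau.1 hef hcov_ef
  have hg := mem_iff_notMem_of_isCover_pair hbinary htau.1 heg hcov_eg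
  exact ⟨hf, fun A hA => not_iff_not.mp ((hf A hA).symm.trans (hg A hA))⟩

/-- Let `C` be a binary tangled clutter (covering number two, every element in a
cover of size two, and every member meets every minimal cover oddly). If `{e,f}` is a minimum
cover, then every member contains exactly one of `e, f`; consequently if `{e,f}` and `{e,g}`
are both minimum covers, then `f` and `g` are duplicated elements. -/
theorem stmt_16 {V : Type*} [Fintype V] [DecidableEq V] (C : Finset (Finset V))
    (hclutter : ∀ A ∈ C, ∀ B ∈ C, A ⊆ B → A = B)
    (hbinary : ∀ A ∈ C, ∀ B : Finset V, IsCover C B →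
      (∀ B' ⊆ B, IsCover C B' → B' = B) → Odd ((A ∩ B).card))
    (htau : (∀ B : Finset V, IsCover C B → 2 ≤ B.card) ∧
      ∃ B : Finset V, IsCover C B ∧ B.card = 2)
    (htangled : ∀ v : V, ∃ B : Finset V, IsCover C B ∧ B.card = 2 ∧ v ∈ B)
    (e f g : V) (hef : e ≠ f) (heg : e ≠ g)
    (hcov_ef : IsCover C {e, f}) (hcov_eg : IsCover C {e, g}) :
    (∀ A ∈ C, (e ∈ A ↔ f ∉ A)) ∧ (∀ A ∈ C, (f ∈ A ↔ g ∈ A)) :=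
  stmt_16_general C hbinary htau e f g hef heg hcov_ef hcov_eg
end
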